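/- For each r ≥ 1, the graph G_r on vertices v_0, ..., v_{3r} (indices mod 3r+1), where v_i is adjacent to v_{i−1}, v_{i+1}, and v_{i+3j+2} for all j ∈ {0,...,r−1}, is not 3-colorable. -/

import Mathlib

/-!
Only the edges of difference `±1` and `±2` are needed: `G_r` contains the square of the cycle on
`ZMod (3r+1)`. If `s` is independent in that square, the windows `{a, a+1, a+2}` for `a ∈ s` are
pairwise disjoint, so `3|s| ≤ 3r+1`, i.e. `|s| ≤ r`. Three colour classes then cover at most `3r`
of the `3r+1` vertices.
-/

open Finset
open scoped Pointwise

/-- Pokrovskiy's graph `G_r` on vertices `ZMod (3r+1)`: `x` and `y` are adjacent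
iff they differ by `±1` or by `±(3j+2)` for some `0 ≤ j < r`. -/
def pok (r : ℕ) : SimpleGraph (ZMod (3 * r + 1)) where
  Adj x y := x ≠ y ∧ (y - x = 1 ∨ x - y = 1 ∨
    (∃ j < r, y - x = ((3 * j + 2 : ℕ) : ZMod (3 * r + 1))) ∨
    (∃ j < r, x - y = ((3 * j + 2 : ℕ) : ZMod (3 * r + 1))))
  symm := by
    refine ⟨?_⟩
    rintro x y ⟨h1, h2⟩
    refine ⟨h1.symm, ?_⟩
    rcases h2 with h | h | h | h
    · exact Or.inr (Or.inl h)
    · exact Or.inl h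
    · exact Or.inr (Or.inr (Or.inr h))
    · exact Or.inr (Or.inr (Or.inl h))
  loopless := ⟨fun x h => h.1 rfl⟩

theorem SimpleGraph.Colorable.card_le_mul {V : Type*} [Fintype V] {G : SimpleGraph V} {k m : ℕ}
    (hG : G.Colorable k) (hm : ∀ s : Finset V, G.IsIndepSet s → #s ≤ m) :
    Fintype.card V ≤ k * m := by
  obtain ⟨C⟩ := hG
  by_contra! h
  obtain ⟨c, hc⟩ := Fintype.exists_lt_card_fiber_of_mul_lt_card C (by simpa using h)
  exact hc.not_ge (hm _ (by simpa [Coloring.colorClass] using C.isIndepSet_colorClass c))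

theorem three_mul_card_le_of_isIndepSet {A : Type*} [AddCommGroup A] [Fintype A] [DecidableEq A]
    {G : SimpleGraph A} {g : A} (h₁ : ∀ a, G.Adj a (a + g)) (h₂ : ∀ a, G.Adj a (a + g + g))
    {s : Finset A} (hs : G.IsIndepSet s) : 3 * #s ≤ Fintype.card A := by
  set T : Finset A := {0, g, g + g}
  have hT : #T = 3 := by
    refine card_eq_three.2 ⟨0, g, g + g, ?_, ?_, ?_, rfl⟩
    · simpa using (h₁ 0).ne
    · simpa using (h₂ 0).ne
    · simpa using (h₁ g).ne
  have hinj : (s ×ˢ T : Set (A × A)).InjOn fun p => p.1 + p.2 := by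
    rintro ⟨a, x⟩ ⟨ha, hx⟩ ⟨b, y⟩ ⟨hb, hy⟩ (hab : a + x = b + y)
    obtain rfl : a = b := by
      by_contra hne
      apply hs ha hb hne
      simp only [T, coe_insert, coe_singleton, Set.mem_insert_iff, Set.mem_singleton_iff] at hx hy
      have hdiff : a = b ∨ b = a + g ∨ b = a + g + g ∨ a = b + g ∨ a = b + g + g := by
        rcases hx with hx | hx | hx <;> rcases hy with hy | hy | hy <;> subst x y <;> grind
      rcases hdiff with h | rfl | rfl | rfl | rfl
      exacts [absurd h hne, h₁ a, h₂ a, (h₁ b).symm, (h₂ b).symm]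
    exact Prod.ext rfl (add_left_cancel hab)
  calc 3 * #s = #(s + T) := by rw [card_add_iff.2 hinj, hT, mul_comm]
    _ ≤ Fintype.card A := card_le_univ _

theorem ZMod.natCast_ne_zero_of_pos_of_lt {n k : ℕ} (hk : 0 < k) (hkn : k < n) :
    (k : ZMod n) ≠ 0 :=
  (ZMod.natCast_eq_zero_iff k n).not.2 (Nat.not_dvd_of_pos_of_lt hk hkn)

theorem pok_adj_add_one {r : ℕ} (hr : 1 ≤ r) (a : ZMod (3 * r + 1)) : (pok r).Adj a (a + 1) := by
  refine ⟨?_, Or.inl (add_sub_cancel_left a 1)⟩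
  have h1 := ZMod.natCast_ne_zero_of_pos_of_lt (n := 3 * r + 1) one_pos (by omega)
  simpa using h1

theorem pok_adj_add_one_add_one {r : ℕ} (hr : 1 ≤ r) (a : ZMod (3 * r + 1)) :
    (pok r).Adj a (a + 1 + 1) := by
  have h2 : ((3 * 0 + 2 : ℕ) : ZMod (3 * r + 1)) = a + 1 + 1 - a := by push_cast; ring
  refine ⟨?_, Or.inr (Or.inr (Or.inl ⟨0, hr, h2.symm⟩))⟩
  have h2_ne := ZMod.natCast_ne_zero_of_pos_of_lt (n := 3 * r + 1) two_pos (by omega)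
  rw [add_assoc, Ne, left_eq_add, one_add_one_eq_two]
  exact_mod_cast h2_ne

/-- For `r ≥ 1`, the graph `G_r` is not 3-colorable. -/
theorem pok_not_three_colorable (r : ℕ) (hr : 1 ≤ r) :
    ¬ (pok r).Colorable 3 := by
  intro hcol
  have hindep : ∀ s : Finset (ZMod (3 * r + 1)), (pok r).IsIndepSet s → #s ≤ r := by
    intro s hs
    have := three_mul_card_le_of_isIndepSet (pok_adj_add_one hr) (pok_adj_add_one_add_one hr) hs
    rw [ZMod.card] at this
    omega
  have := hcol.card_le_mul hindep
  rw [ZMod.card] at this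
  omega
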